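/- The minimum cost of weighted token swapping on a star equals D_w + 2w(x) + 2·min{w(a)(ℓ−1), w(h)(ℓ+1)} when ℓ ≥ 1 (and equals D_w when ℓ = 0), where x is a minimum-weight token in the unlocked cycle, a is a minimum-weight active token, h is a minimum-weight token on a happy leaf, ℓ is the number of nontrivial locked cycles, and D_w = Σ_t w(t)d(t) (if no happy leaf exists, the w(h) term is omitted). -/

import Mathlib

/-- Distance between two vertices of the star with center `0` on `Fin (n+1)`. -/
def starDist (n : ℕ) (u v : Fin (n + 1)) : ℕ :=
  if u = v then 0 else if u = 0 ∨ v = 0 then 1 else 2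

/-- Star token swapping: a swap exchanges the center token with a leaf token. -/
def applyStarSwaps (n : ℕ) (π : Equiv.Perm (Fin (n + 1))) (s : List (Fin (n + 1))) :
    Equiv.Perm (Fin (n + 1)) :=
  s.foldl (fun σ v => σ * Equiv.swap 0 v) π

/-- Cost of a sequence of star swaps: swapping tokens `t, t'` costs `w t + w t'`. -/
def starCost {n : ℕ} (w : Fin (n + 1) → ℝ) :
    List (Fin (n + 1)) → Equiv.Perm (Fin (n + 1)) → ℝ
  | [], _ => 0
  | v :: s, π => (w (π 0) + w (π v)) + starCost w s (π * Equiv.swap 0 v)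

/-- Weighted total distance `D_w = Σ_t w(t) d(t)`; token `t` sits on vertex `π⁻¹ t`. -/
def Dw (n : ℕ) (w : Fin (n + 1) → ℝ) (π : Equiv.Perm (Fin (n + 1))) : ℝ :=
  ∑ t : Fin (n + 1), w t * (starDist n (π⁻¹ t) t : ℝ)

/-- `H`: the tokens on happy leaves. -/
def Hset (n : ℕ) (π : Equiv.Perm (Fin (n + 1))) : Finset (Fin (n + 1)) :=
  Finset.univ.filter fun t => π t = t ∧ t ≠ 0

/-- `A`: the active tokens (all tokens not on happy leaves). -/
def Aset (n : ℕ) (π : Equiv.Perm (Fin (n + 1))) : Finset (Fin (n + 1)) :=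
  Finset.univ \ Hset n π

/-- `X`: the tokens of the unlocked cycle (the cycle containing the center `0`). -/
def Xset (n : ℕ) (π : Equiv.Perm (Fin (n + 1))) : Finset (Fin (n + 1)) :=
  insert 0 (π.cycleOf 0).support

/-- `ℓ`: the number of nontrivial locked cycles (cycles of length ≥ 2 avoiding `0`). -/
def lockC (n : ℕ) (π : Equiv.Perm (Fin (n + 1))) : ℕ :=
  (π.cycleFactorsFinset.filter fun c => c 0 = 0).card

/-!
Every swap lowers the potential `D_w + 2 · excess` by at most its cost, where `excess` vanishes
when `ℓ = 0` and is `w(x)` plus the cheapest carrier cost otherwise; since the potential is `0` at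
the identity, it bounds every sorting cost from below. The bound is attained by a greedy schedule
in which every swap is tight: while no locked cycle is left, or the center token is heavier than
`x`, send the center token home; otherwise merge the nontrivial locked cycle with the lightest
token into the unlocked cycle, after first fetching the optimal carrier from its happy leaf when
it lives on one. Termination is by lexicographic descent on `ℓ` and the support size.
-/

open Equiv Equiv.Perm Finset

namespace Equiv.Perm

variable {α : Type*} [Finite α] {f : Perm α} {x y v : α}

theorem SameCycle.mem_of_mapsTo {W : Set α} (hW : Set.MapsTo f W W) (hx : x ∈ W)
    (h : f.SameCycle x y) : y ∈ W := by
  obtain ⟨i, rfl⟩ := h.exists_nat_pow_eq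
  rw [coe_pow]
  exact hW.iterate i hx

variable [DecidableEq α]

theorem SameCycle.of_mul_swap (h : (f * swap x v).SameCycle x y) :
    f.SameCycle x y ∨ f.SameCycle v y := by
  refine h.mem_of_mapsTo (W := {y | f.SameCycle x y ∨ f.SameCycle v y}) (fun u hu => ?_)
    (.inl .rfl)
  simp only [mul_apply, swap_apply_def]
  split_ifs
  · exact .inr (sameCycle_apply_right.mpr .rfl)
  · exact .inl (sameCycle_apply_right.mpr .rfl)
  · exact hu.imp sameCycle_apply_right.mpr sameCycle_apply_right.mpr

theorem SameCycle.mul_swap (h : f.SameCycle x y) :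
    (f * swap x v).SameCycle x y ∨ (f * swap x v).SameCycle v y :=
  SameCycle.of_mul_swap (f := f * swap x v) (by rwa [mul_swap_mul_self])

theorem sameCycle_mul_swap_of_not_sameCycle (h : ¬ f.SameCycle x v) :
    (f * swap x v).SameCycle x v := by
  set g := f * swap x v
  have hgx : g x = f v := by simp [g]
  -- the `f`-cycle of `v` is entered by `g` at `f v = g x` and followed until it returns to `v`
  have hW : Set.MapsTo f {y | f.SameCycle v y ∧ g.SameCycle x y}
      {y | f.SameCycle v y ∧ g.SameCycle x y} := by
    rintro u ⟨hvu, hxu⟩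
    refine ⟨sameCycle_apply_right.mpr hvu, ?_⟩
    by_cases huv : u = v
    · rw [huv, ← hgx]
      exact sameCycle_apply_right.mpr .rfl
    · have hux : u ≠ x := fun hux => h (hux ▸ hvu).symm
      have hgu : g u = f u := by simp [g, swap_apply_of_ne_of_ne hux huv]
      rw [← hgu]
      exact sameCycle_apply_right.mpr hxu
  exact ((sameCycle_apply_left.mpr (SameCycle.refl f v)).mem_of_mapsTo hW
    ⟨sameCycle_apply_right.mpr .rfl, hgx ▸ sameCycle_apply_right.mpr .rfl⟩).2

end Equiv.Perm

section Star

variable {n : ℕ} {π : Perm (Fin (n + 1))} {t v : Fin (n + 1)}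

theorem mem_Xset : t ∈ Xset n π ↔ π.SameCycle 0 t := by
  rw [Xset, mem_insert, mem_support_cycleOf_iff, mem_support]
  constructor
  · rintro (rfl | ⟨h, -⟩)
    exacts [.rfl, h]
  · intro h
    by_cases h0 : π 0 = 0
    · exact .inl (h.eq_of_left h0).symm
    · exact .inr ⟨h, h0⟩

theorem zero_mem_Xset : 0 ∈ Xset n π := mem_insert_self _ _

theorem Xset_nonempty : (Xset n π).Nonempty := ⟨0, zero_mem_Xset⟩

theorem apply_zero_mem_Xset : π 0 ∈ Xset n π := mem_Xset.mpr (sameCycle_apply_right.mpr .rfl)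

theorem mem_Hset : t ∈ Hset n π ↔ π t = t ∧ t ≠ 0 := by simp [Hset]

theorem mem_Aset : t ∈ Aset n π ↔ t ∉ Hset n π := by simp [Aset]

theorem notMem_Hset_of_mem_Xset (ht : t ∈ Xset n π) : t ∉ Hset n π := fun h =>
  (mem_Hset.mp h).2 ((mem_Xset.mp ht).eq_of_right (mem_Hset.mp h).1).symm

theorem mem_Hset_mul_swap_of_ne (ht : t ≠ v) : t ∈ Hset n (π * swap 0 v) ↔ t ∈ Hset n π := by
  rcases eq_or_ne t 0 with rfl | ht0
  · simp [mem_Hset]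
  · simp [mem_Hset, swap_apply_of_ne_of_ne ht0 ht, ht0]

theorem mem_Hset_mul_swap_self (hv : v ≠ 0) : v ∈ Hset n (π * swap 0 v) ↔ π 0 = v := by
  simp [mem_Hset, hv]

theorem mem_Hset_mul_swap_of_not_sameCycle (h : ¬ π.SameCycle 0 v) (hv : π v ≠ v) :
    t ∈ Hset n (π * swap 0 v) ↔ t ∈ Hset n π := by
  rcases eq_or_ne t v with rfl | htv
  · rw [mem_Hset_mul_swap_self (by rintro rfl; exact h .rfl), mem_Hset]
    refine iff_of_false (fun h0 => h ?_) fun h' => hv h'.1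
    rw [← h0]
    exact sameCycle_apply_right.mpr .rfl
  · exact mem_Hset_mul_swap_of_ne htv

theorem Hset_subset_Hset_mul_swap (h : π.SameCycle 0 v) :
    Hset n π ⊆ Hset n (π * swap 0 v) := by
  intro t ht
  have htv : t ≠ v := by
    rintro rfl
    exact notMem_Hset_of_mem_Xset (mem_Xset.mpr h) ht
  exact (mem_Hset_mul_swap_of_ne htv).mpr ht

theorem Xset_mul_swap_subset (h : π.SameCycle 0 v) : Xset n (π * swap 0 v) ⊆ Xset n π := by
  intro y hy
  rw [mem_Xset] at hy ⊢
  exact hy.of_mul_swap.elim id h.trans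

theorem Xset_mul_swap_subset_insert (hv : π v = v) :
    Xset n (π * swap 0 v) ⊆ insert v (Xset n π) := by
  intro y hy
  rw [mem_Xset] at hy
  rw [mem_insert, mem_Xset]
  exact hy.of_mul_swap.symm.imp_left fun h => (h.eq_of_left hv).symm

theorem Xset_subset_Xset_mul_swap (h : ¬ π.SameCycle 0 v) :
    Xset n π ⊆ Xset n (π * swap 0 v) := by
  intro y hy
  rw [mem_Xset] at hy ⊢
  exact hy.mul_swap.elim id (sameCycle_mul_swap_of_not_sameCycle h).trans

theorem mem_Xset_mul_swap_apply_zero (ht : t ∈ Xset n π) (htv : t ≠ π 0) :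
    t ∈ Xset n (π * swap 0 (π 0)) := by
  rw [mem_Xset] at ht ⊢
  have hfix : (π * swap 0 (π 0)) (π 0) = π 0 := by simp
  exact ht.mul_swap.resolve_right fun h => htv (h.eq_of_left hfix).symm

end Star

section Locked

variable {n : ℕ} {π : Perm (Fin (n + 1))} {v : Fin (n + 1)}

theorem lockC_eq_card_add (π : Perm (Fin (n + 1))) (v : Fin (n + 1)) :
    lockC n π = #(π.cycleFactorsFinset.filter fun c => c 0 = 0 ∧ c v = v) +
      if π v ≠ v ∧ ¬ π.SameCycle 0 v then 1 else 0 := by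
  rw [lockC, ← card_filter_add_card_filter_not (fun c => c v = v), filter_filter, filter_filter]
  congr 1
  split_ifs with h
  · rw [card_eq_one]
    refine ⟨π.cycleOf v, ext fun c => ?_⟩
    simp only [mem_filter, mem_singleton]
    constructor
    · rintro ⟨hc, -, hcv⟩
      exact cycle_is_cycleOf (mem_support.mpr hcv) hc
    · rintro rfl
      refine ⟨cycleOf_mem_cycleFactorsFinset_iff.mpr (mem_support.mpr h.1), ?_, ?_⟩
      · rw [cycleOf_apply, if_neg fun h' => h.2 h'.symm]
      · rw [cycleOf_apply_self]; exact h.1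
  · rw [card_eq_zero, filter_eq_empty_iff]
    rintro c hc ⟨hc0, hcv⟩
    obtain rfl := cycle_is_cycleOf (mem_support.mpr hcv) hc
    have hv : v ∈ π.support := (mem_support_cycleOf_iff.mp (mem_support.mpr hcv)).2
    refine h ⟨mem_support.mp hv, fun h0 => ?_⟩
    exact mem_support.mp (mem_support_cycleOf_iff.mpr ⟨h0.symm, hv⟩) hc0

theorem filter_cycleFactorsFinset_mul_swap (v : Fin (n + 1)) :
    ((π * swap 0 v).cycleFactorsFinset.filter fun c => c 0 = 0 ∧ c v = v) =
      π.cycleFactorsFinset.filter fun c => c 0 = 0 ∧ c v = v := by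
  ext c
  simp only [mem_filter, mem_cycleFactorsFinset_iff, and_congr_left_iff]
  rintro ⟨h0, hv⟩
  refine and_congr_right fun _ => forall₂_congr fun a ha => ?_
  have ha0 : a ≠ 0 := by rintro rfl; exact mem_support.mp ha h0
  have hav : a ≠ v := by rintro rfl; exact mem_support.mp ha hv
  rw [mul_apply, swap_apply_of_ne_of_ne ha0 hav]

theorem lockC_mul_swap (v : Fin (n + 1)) :
    lockC n (π * swap 0 v) + (if π v ≠ v ∧ ¬ π.SameCycle 0 v then 1 else 0) =
      lockC n π + if π 0 ≠ v ∧ ¬ (π * swap 0 v).SameCycle 0 v then 1 else 0 := by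
  rw [lockC_eq_card_add (π * swap 0 v) v, lockC_eq_card_add π v,
    filter_cycleFactorsFinset_mul_swap, mul_apply, swap_apply_right, add_right_comm]

theorem lockC_le_lockC_mul_swap (h : π.SameCycle 0 v) :
    lockC n π ≤ lockC n (π * swap 0 v) := by
  have := lockC_mul_swap (π := π) v
  rw [if_neg fun h' => h'.2 h] at this
  omega

theorem lockC_mul_swap_of_mem_Hset (hv : v ∈ Hset n π) :
    lockC n (π * swap 0 v) = lockC n π := by
  obtain ⟨hv, hv0⟩ := mem_Hset.mp hv
  have h : ¬ π.SameCycle 0 v := fun h => hv0 (h.eq_of_right hv).symm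
  have := lockC_mul_swap (π := π) v
  rwa [if_neg fun h' => h'.1 hv,
    if_neg fun h' => h'.2 (sameCycle_mul_swap_of_not_sameCycle h), add_zero, add_zero] at this

theorem lockC_mul_swap_add_one (h : ¬ π.SameCycle 0 v) (hv : π v ≠ v) :
    lockC n (π * swap 0 v) + 1 = lockC n π := by
  have := lockC_mul_swap (π := π) v
  rwa [if_pos ⟨hv, h⟩,
    if_neg fun h' => h'.2 (sameCycle_mul_swap_of_not_sameCycle h), add_zero] at this

theorem lockC_mul_swap_apply_zero : lockC n (π * swap 0 (π 0)) = lockC n π := by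
  have := lockC_mul_swap (π := π) (π 0)
  rwa [if_neg fun h => h.2 (sameCycle_apply_right.mpr .rfl), if_neg fun h => h.1 rfl,
    add_zero, add_zero] at this

theorem eq_one_of_lockC_eq_zero (h0 : π 0 = 0) (hl : lockC n π = 0) : π = 1 := by
  rw [← cycleFactorsFinset_eq_empty_iff, ← card_eq_zero, ← hl, lockC, filter_true_of_mem]
  intro c hc
  by_contra hc0
  exact hc0 (((mem_cycleFactorsFinset_iff.mp hc).2 0 (mem_support.mpr hc0)).trans h0)

theorem Aset_sdiff_Xset_nonempty (hl : lockC n π ≠ 0) : (Aset n π \ Xset n π).Nonempty := by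
  obtain ⟨c, hc⟩ := card_ne_zero.mp hl
  obtain ⟨hc, hc0⟩ := mem_filter.mp hc
  obtain ⟨b, hb⟩ := (mem_cycleFactorsFinset_iff.mp hc).1.nonempty_support
  obtain rfl := cycle_is_cycleOf hb hc
  have hbπ : b ∈ π.support := (mem_support_cycleOf_iff.mp hb).2
  refine ⟨b, mem_sdiff.mpr ⟨mem_Aset.mpr fun h => mem_support.mp hbπ (mem_Hset.mp h).1, ?_⟩⟩
  exact fun hbX => mem_support.mp (mem_support_cycleOf_iff.mpr ⟨(mem_Xset.mp hbX).symm, hbπ⟩) hc0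

end Locked

section Distance

variable {n : ℕ} {w : Fin (n + 1) → ℝ} {π : Perm (Fin (n + 1))} {v : Fin (n + 1)}

theorem Dw_eq_sum_apply : Dw n w π = ∑ u, w (π u) * starDist n u (π u) := by
  rw [Dw, ← Equiv.sum_comp π]
  simp

theorem Dw_one : Dw n w 1 = 0 := by
  simp [Dw, starDist]

theorem starDist_zero_sub (hv : v ≠ 0) (t : Fin (n + 1)) :
    (starDist n 0 t : ℝ) - starDist n v t = if t = v then 1 else -1 := by
  rcases eq_or_ne t v with rfl | htv
  · simp [starDist, hv.symm]
  · rcases eq_or_ne t 0 with rfl | ht0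
    · simp [starDist, hv, hv.symm]
    · simp [starDist, htv, ht0, ht0.symm, hv, htv.symm]
      norm_num

/-- A swapped token lowers `D_w` by its weight unless it moves away from its target: the center
token when it is not sent home, the leaf token when it was home. -/
theorem Dw_mul_swap (hv : v ≠ 0) :
    Dw n w (π * swap 0 v) + (w (π 0) + w (π v)) =
      Dw n w π + 2 * ((if π 0 = v then 0 else w (π 0)) + if π v = v then w (π v) else 0) := by
  have hsum : Dw n w (π * swap 0 v) - Dw n w π =
      w (π v) * ((starDist n 0 (π v) : ℝ) - starDist n v (π v)) -
        w (π 0) * ((starDist n 0 (π 0) : ℝ) - starDist n v (π 0)) := by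
    rw [Dw_eq_sum_apply, Dw_eq_sum_apply, ← sum_sub_distrib, Fintype.sum_eq_add 0 v hv.symm]
    · simp only [mul_apply, swap_apply_left, swap_apply_right]
      ring
    · rintro u ⟨hu0, huv⟩
      simp [swap_apply_of_ne_of_ne hu0 huv]
  rw [starDist_zero_sub hv, starDist_zero_sub hv] at hsum
  split_ifs at hsum ⊢ <;> linarith

end Distance

/-- Half the extra cost, on top of `D_w + 2 w(x)`, of a schedule that uses token `t` to break into
the `ℓ` locked cycles; a token on a happy leaf must moreover leave its leaf and come back. -/
noncomputable def carrierCost (n : ℕ) (w : Fin (n + 1) → ℝ) (π : Perm (Fin (n + 1)))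
    (t : Fin (n + 1)) : ℝ :=
  if t ∈ Hset n π then w t * (lockC n π + 1) else w t * (lockC n π - 1)

noncomputable def minCarrierCost (n : ℕ) (w : Fin (n + 1) → ℝ) (π : Perm (Fin (n + 1))) : ℝ :=
  univ.inf' univ_nonempty (carrierCost n w π)

noncomputable def excess (n : ℕ) (w : Fin (n + 1) → ℝ) (π : Perm (Fin (n + 1))) : ℝ :=
  if lockC n π = 0 then 0 else (Xset n π).inf' Xset_nonempty w + minCarrierCost n w π

noncomputable def potential (n : ℕ) (w : Fin (n + 1) → ℝ) (π : Perm (Fin (n + 1))) : ℝ :=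
  Dw n w π + 2 * excess n w π

def sortCosts (n : ℕ) (w : Fin (n + 1) → ℝ) (π : Perm (Fin (n + 1))) : Set ℝ :=
  {c | ∃ s : List (Fin (n + 1)), (∀ v ∈ s, v ≠ 0) ∧ applyStarSwaps n π s = 1 ∧ starCost w s π = c}

section Potential

variable {n : ℕ} {w : Fin (n + 1) → ℝ} {π : Perm (Fin (n + 1))} {t v : Fin (n + 1)}

theorem carrierCost_of_notMem (ht : t ∉ Hset n π) :
    carrierCost n w π t = w t * (lockC n π - 1) := if_neg ht

theorem mul_lockC_sub_one_le_carrierCost (hw : ∀ t, 0 ≤ w t) (t : Fin (n + 1)) :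
    w t * (lockC n π - 1) ≤ carrierCost n w π t := by
  unfold carrierCost
  split_ifs
  exacts [mul_le_mul_of_nonneg_left (by linarith) (hw t), le_rfl]

theorem minCarrierCost_le (t : Fin (n + 1)) : minCarrierCost n w π ≤ carrierCost n w π t :=
  inf'_le _ (mem_univ t)

theorem exists_carrierCost_eq_minCarrierCost :
    ∃ t, carrierCost n w π t = minCarrierCost n w π := by
  obtain ⟨t, -, ht⟩ := exists_mem_eq_inf' univ_nonempty (carrierCost n w π)
  exact ⟨t, ht.symm⟩

theorem minCarrierCost_le_inf'_Xset :
    minCarrierCost n w π ≤ (Xset n π).inf' Xset_nonempty w * (lockC n π - 1) := by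
  obtain ⟨x, hx, hxeq⟩ := exists_mem_eq_inf' Xset_nonempty w
  rw [hxeq, ← carrierCost_of_notMem (notMem_Hset_of_mem_Xset hx)]
  exact minCarrierCost_le x

theorem inf'_Xset_nonneg (hw : ∀ t, 0 ≤ w t) : 0 ≤ (Xset n π).inf' Xset_nonempty w :=
  le_inf' _ _ fun t _ => hw t

theorem excess_of_ne_zero (hl : lockC n π ≠ 0) :
    excess n w π = (Xset n π).inf' Xset_nonempty w + minCarrierCost n w π := if_neg hl

theorem excess_nonneg (hw : ∀ t, 0 ≤ w t) : 0 ≤ excess n w π := by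
  unfold excess
  split_ifs with hl
  · exact le_rfl
  · have hl : (1 : ℝ) ≤ lockC n π := by exact_mod_cast Nat.one_le_iff_ne_zero.mpr hl
    refine add_nonneg (inf'_Xset_nonneg hw) (le_inf' _ _ fun t _ => ?_)
    exact (mul_nonneg (hw t) (by linarith)).trans (mul_lockC_sub_one_le_carrierCost hw t)

theorem potential_one : potential n w 1 = 0 := by
  simp [potential, excess, lockC, Dw_one]

theorem carrierCost_mul_swap_of_ne (hl : lockC n (π * swap 0 v) = lockC n π) (htv : t ≠ v) :
    carrierCost n w (π * swap 0 v) t = carrierCost n w π t := by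
  simp only [carrierCost, mem_Hset_mul_swap_of_ne htv, hl]

theorem excess_le_excess (hw : ∀ t, 0 ≤ w t) {q : Perm (Fin (n + 1))}
    (hX : Xset n q ⊆ Xset n π) (hH : Hset n π ⊆ Hset n q) (hl : lockC n π ≤ lockC n q) :
    excess n w π ≤ excess n w q := by
  by_cases h0 : lockC n π = 0
  · rw [excess, if_pos h0]
    exact excess_nonneg hw
  rw [excess_of_ne_zero h0, excess_of_ne_zero (by omega)]
  have hl : (lockC n π : ℝ) ≤ lockC n q := by exact_mod_cast hl
  refine add_le_add (inf'_mono w hX Xset_nonempty) (le_inf' _ _ fun t _ => ?_)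
  refine (minCarrierCost_le t).trans ?_
  unfold carrierCost
  split_ifs with h1 h2 h2
  · exact mul_le_mul_of_nonneg_left (by linarith) (hw t)
  · exact absurd (hH h1) h2
  · exact mul_le_mul_of_nonneg_left (by linarith) (hw t)
  · exact mul_le_mul_of_nonneg_left (by linarith) (hw t)

theorem excess_le_add_excess_mul_swap_of_mem_Hset (hw : ∀ t, 0 ≤ w t) (hv : v ∈ Hset n π) :
    excess n w π ≤ (Xset n π).inf' Xset_nonempty w + w v + excess n w (π * swap 0 v) := by
  have hl := lockC_mul_swap_of_mem_Hset hv
  obtain ⟨hvv, hv0⟩ := mem_Hset.mp hv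
  by_cases h0 : lockC n π = 0
  · rw [excess, if_pos h0]
    have := excess_nonneg hw (n := n) (π := π * swap 0 v)
    linarith [hw v, inf'_Xset_nonneg hw (π := π)]
  rw [excess_of_ne_zero h0, excess_of_ne_zero (hl ▸ h0)]
  set wx := (Xset n π).inf' Xset_nonempty w
  have hx : min (w v) wx ≤ (Xset n (π * swap 0 v)).inf' Xset_nonempty w := by
    rw [← inf'_insert Xset_nonempty]
    exact inf'_mono w (Xset_mul_swap_subset_insert hvv) Xset_nonempty
  obtain ⟨t, ht⟩ := exists_carrierCost_eq_minCarrierCost (w := w) (π := π * swap 0 v)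
  rw [← ht]
  rcases eq_or_ne t v with rfl | htv
  · have hvq : t ∉ Hset n (π * swap 0 t) := by
      rw [mem_Hset_mul_swap_self hv0]
      exact fun h => hv0 (π.injective (hvv.trans h.symm))
    rw [carrierCost_of_notMem hvq, hl]
    rcases le_total (w t) wx with htx | htx
    · have := minCarrierCost_le (w := w) (π := π) t
      rw [carrierCost, if_pos hv] at this
      rw [min_eq_left htx] at hx
      linarith
    · have hm : minCarrierCost n w π ≤ wx * (lockC n π - 1) := minCarrierCost_le_inf'_Xset
      have hl1 : (1 : ℝ) ≤ lockC n π := by exact_mod_cast Nat.one_le_iff_ne_zero.mpr h0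
      have := mul_le_mul_of_nonneg_right htx (sub_nonneg.mpr hl1)
      rw [min_eq_right htx] at hx
      linarith [hw t, inf'_Xset_nonneg hw (π := π)]
  · rw [carrierCost_mul_swap_of_ne hl htv]
    have := minCarrierCost_le (w := w) (π := π) t
    linarith [hw v, le_min (hw v) (inf'_Xset_nonneg hw (π := π))]

theorem excess_le_add_excess_mul_swap_of_not_sameCycle (hw : ∀ t, 0 ≤ w t)
    (h : ¬ π.SameCycle 0 v) (hv : π v ≠ v) :
    excess n w π ≤ (Xset n π).inf' Xset_nonempty w + excess n w (π * swap 0 v) := by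
  set q := π * swap 0 v
  have hl := lockC_mul_swap_add_one h hv
  have hτ : ∀ t, carrierCost n w π t = carrierCost n w q t + w t := by
    intro t
    simp only [carrierCost, q, mem_Hset_mul_swap_of_not_sameCycle h hv, ← hl]
    push_cast
    split_ifs <;> ring
  rw [excess_of_ne_zero (by omega)]
  by_cases hq0 : lockC n q = 0
  · have := minCarrierCost_le_inf'_Xset (w := w) (π := π)
    rw [← hl, hq0, Nat.cast_one, sub_self, mul_zero] at this
    rw [excess, if_pos hq0]
    linarith
  rw [excess_of_ne_zero hq0]
  have hl1 : (1 : ℝ) ≤ lockC n q := by exact_mod_cast Nat.one_le_iff_ne_zero.mpr hq0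
  obtain ⟨x, hx, hxeq⟩ := exists_mem_eq_inf' (Xset_nonempty (π := q)) w
  obtain ⟨t, ht⟩ := exists_carrierCost_eq_minCarrierCost (w := w) (π := q)
  rw [hxeq, ← ht]
  -- merging lowers every carrier cost by the carrier's weight, and `x` beats heavier carriers
  rcases le_total (w t) (w x) with htx | htx
  · linarith [minCarrierCost_le (w := w) (π := π) t, hτ t]
  · have h1 := minCarrierCost_le (w := w) (π := π) x
    rw [hτ x, carrierCost_of_notMem (notMem_Hset_of_mem_Xset hx)] at h1
    have h2 := mul_lockC_sub_one_le_carrierCost hw (π := q) t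
    have := mul_le_mul_of_nonneg_right htx (sub_nonneg.mpr hl1)
    linarith

theorem add_potential_mul_swap (hv : v ≠ 0) :
    w (π 0) + w (π v) + potential n w (π * swap 0 v) = potential n w π +
      2 * (((if π 0 = v then 0 else w (π 0)) + if π v = v then w (π v) else 0) +
        excess n w (π * swap 0 v) - excess n w π) := by
  have := Dw_mul_swap (w := w) (π := π) hv
  unfold potential
  linarith

theorem potential_le_add_potential_mul_swap (hw : ∀ t, 0 ≤ w t) (hv : v ≠ 0) :
    potential n w π ≤ w (π 0) + w (π v) + potential n w (π * swap 0 v) := by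
  suffices h : excess n w π ≤ ((if π 0 = v then 0 else w (π 0)) +
      if π v = v then w (π v) else 0) + excess n w (π * swap 0 v) by
    linarith [add_potential_mul_swap (w := w) (π := π) hv]
  have hx : (Xset n π).inf' Xset_nonempty w ≤ w (π 0) := inf'_le w apply_zero_mem_Xset
  by_cases hS : π.SameCycle 0 v
  · have := excess_le_excess hw (Xset_mul_swap_subset hS) (Hset_subset_Hset_mul_swap hS)
      (lockC_le_lockC_mul_swap hS)
    split_ifs <;> linarith [hw (π 0), hw (π v)]
  · have h0v : π 0 ≠ v := fun h => hS (h ▸ sameCycle_apply_right.mpr .rfl)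
    rw [if_neg h0v]
    by_cases hvv : π v = v
    · rw [if_pos hvv, hvv]
      linarith [excess_le_add_excess_mul_swap_of_mem_Hset hw (mem_Hset.mpr ⟨hvv, hv⟩)]
    · rw [if_neg hvv]
      linarith [excess_le_add_excess_mul_swap_of_not_sameCycle hw hS hvv]

theorem potential_le_of_mem_sortCosts (hw : ∀ t, 0 ≤ w t) {c : ℝ} (hc : c ∈ sortCosts n w π) :
    potential n w π ≤ c := by
  obtain ⟨s, hs0, hs1, rfl⟩ := hc
  induction s generalizing π with
  | nil =>
    obtain rfl : π = 1 := hs1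
    simp [starCost, potential_one]
  | cons v s ih =>
    have := potential_le_add_potential_mul_swap hw (π := π) (hs0 v List.mem_cons_self)
    have := ih (fun u hu => hs0 u (List.mem_cons_of_mem v hu)) hs1
    rw [starCost]
    linarith

end Potential

section Strategy

variable {n : ℕ} {w : Fin (n + 1) → ℝ} {π : Perm (Fin (n + 1))} {v : Fin (n + 1)}

theorem card_support_mul_swap_apply_zero_lt (h0 : π 0 ≠ 0) :
    #(π * swap 0 (π 0)).support < #π.support := by
  rw [mul_swap_eq_swap_mul]
  exact card_support_swap_mul (π.injective.ne h0)

theorem add_potential_mul_swap_apply_zero_le (h0 : π 0 ≠ 0)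
    (h : lockC n π = 0 ∨ (Xset n π).inf' Xset_nonempty w < w (π 0)) :
    w (π 0) + w (π (π 0)) + potential n w (π * swap 0 (π 0)) ≤ potential n w π := by
  suffices h : excess n w (π * swap 0 (π 0)) ≤ excess n w π by
    rw [add_potential_mul_swap h0, if_pos rfl, if_neg (π.injective.ne h0)]
    linarith
  have hl := lockC_mul_swap_apply_zero (π := π)
  by_cases hl0 : lockC n π = 0
  · simp [excess, hl, hl0]
  have hlt := h.resolve_left hl0
  have hl1 : (1 : ℝ) ≤ lockC n π := by exact_mod_cast Nat.one_le_iff_ne_zero.mpr hl0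
  rw [excess_of_ne_zero hl0, excess_of_ne_zero (hl ▸ hl0)]
  obtain ⟨x, hx, hxeq⟩ := exists_mem_eq_inf' (Xset_nonempty (π := π)) w
  have hxv : x ≠ π 0 := by
    rintro rfl
    exact hlt.ne hxeq
  refine add_le_add (hxeq ▸ inf'_le w (mem_Xset_mul_swap_apply_zero hx hxv))
    (le_inf' _ _ fun t _ => ?_)
  rcases eq_or_ne t (π 0) with rfl | htv
  · calc minCarrierCost n w (π * swap 0 (π 0))
        ≤ carrierCost n w π x := (minCarrierCost_le x).trans_eq (carrierCost_mul_swap_of_ne hl hxv)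
      _ = w x * (lockC n π - 1) := carrierCost_of_notMem (notMem_Hset_of_mem_Xset hx)
      _ ≤ w (π 0) * (lockC n π - 1) :=
        mul_le_mul_of_nonneg_right (hxeq ▸ hlt.le) (by linarith)
      _ = carrierCost n w π (π 0) :=
        (carrierCost_of_notMem (notMem_Hset_of_mem_Xset apply_zero_mem_Xset)).symm
  · exact (minCarrierCost_le t).trans_eq (carrierCost_mul_swap_of_ne hl htv)

theorem excess_mul_swap_le_of_not_sameCycle (h : ¬ π.SameCycle 0 v) (hv : π v ≠ v)
    {a : Fin (n + 1)} (ha : a ∉ Hset n π) (haX : a ∈ Xset n π ∨ w (π v) ≤ w a) :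
    excess n w (π * swap 0 v) ≤ w a * (lockC n π - 1) := by
  set q := π * swap 0 v
  have hlq : (lockC n q : ℝ) + 1 = lockC n π := by exact_mod_cast lockC_mul_swap_add_one h hv
  by_cases hq0 : lockC n q = 0
  · rw [excess, if_pos hq0, ← hlq, hq0]
    simp
  rw [excess_of_ne_zero hq0]
  have hwx : (Xset n q).inf' Xset_nonempty w ≤ w a := by
    rcases haX with haX | hwa
    · exact inf'_le w (Xset_subset_Xset_mul_swap h haX)
    · have hvq : π v ∈ Xset n q := by simpa [q] using apply_zero_mem_Xset (π := q)
      exact (inf'_le w hvq).trans hwa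
  have haq : a ∉ Hset n q := mt (mem_Hset_mul_swap_of_not_sameCycle h hv).mp ha
  have hmq := (minCarrierCost_le (w := w) (π := q) a).trans_eq (carrierCost_of_notMem haq)
  have : w a * (lockC n π - 1) = w a + w a * (lockC n q - 1) := by
    rw [← hlq]
    ring
  linarith

/-- When the center holds a lightest token of `X` and the active token `a` is an optimal carrier,
bringing the lightest token of a nontrivial locked cycle to the center is a tight swap. -/
theorem exists_add_potential_mul_swap_le (hl : lockC n π ≠ 0)
    (hx : ∀ t ∈ Xset n π, w (π 0) ≤ w t) {a : Fin (n + 1)} (ha : a ∉ Hset n π)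
    (hm : ∀ t, w a * (lockC n π - 1) ≤ carrierCost n w π t) :
    ∃ v ≠ 0, lockC n (π * swap 0 v) < lockC n π ∧
      w (π 0) + w (π v) + potential n w (π * swap 0 v) ≤ potential n w π := by
  obtain ⟨b, hb, hbmin⟩ := (Aset n π \ Xset n π).exists_min_image w (Aset_sdiff_Xset_nonempty hl)
  obtain ⟨hbA, hbX⟩ := mem_sdiff.mp hb
  have hπv : π (π⁻¹ b) = b := π.apply_symm_apply b
  have hS : ¬ π.SameCycle 0 (π⁻¹ b) :=
    fun h => hbX (hπv ▸ mem_Xset.mpr (sameCycle_apply_right.mpr h))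
  have hv0 : π⁻¹ b ≠ 0 := by
    rintro h
    exact hS (h ▸ .rfl)
  have h0v : π 0 ≠ π⁻¹ b := fun h => hS (h ▸ sameCycle_apply_right.mpr .rfl)
  have hvv : π (π⁻¹ b) ≠ π⁻¹ b := by
    rw [hπv]
    intro h
    exact mem_Aset.mp hbA
      (mem_Hset.mpr ⟨(congrArg π h).trans hπv, fun hb0 => hbX (hb0 ▸ zero_mem_Xset)⟩)
  refine ⟨π⁻¹ b, hv0, by have := lockC_mul_swap_add_one hS hvv; omega, ?_⟩
  have haX : a ∈ Xset n π ∨ w (π (π⁻¹ b)) ≤ w a := by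
    by_cases haX : a ∈ Xset n π
    · exact .inl haX
    · rw [hπv]
      exact .inr (hbmin a (mem_sdiff.mpr ⟨mem_Aset.mpr ha, haX⟩))
  have hq := excess_mul_swap_le_of_not_sameCycle hS hvv ha haX
  have hm' : w a * (lockC n π - 1) ≤ minCarrierCost n w π := le_inf' _ _ fun t _ => hm t
  have hx' : w (π 0) ≤ (Xset n π).inf' Xset_nonempty w := le_inf' _ _ hx
  rw [add_potential_mul_swap hv0, if_neg h0v, if_neg hvv, excess_of_ne_zero hl]
  linarith

/-- An optimal carrier `v` on a happy leaf is first swapped into the center, by a tight swap after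
which `v` is an optimal active carrier as required by `exists_add_potential_mul_swap_le`. -/
theorem add_potential_mul_swap_le_of_mem_Hset (hw : ∀ t, 0 ≤ w t) (hl : lockC n π ≠ 0)
    (hx : ∀ t ∈ Xset n π, w (π 0) ≤ w t) (hv : v ∈ Hset n π)
    (hm : ∀ t, carrierCost n w π v ≤ carrierCost n w π t) :
    w (π 0) + w (π v) + potential n w (π * swap 0 v) ≤ potential n w π ∧
      lockC n (π * swap 0 v) = lockC n π ∧
      (∀ t ∈ Xset n (π * swap 0 v), w ((π * swap 0 v) 0) ≤ w t) ∧
      v ∉ Hset n (π * swap 0 v) ∧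
      ∀ t, w v * (lockC n (π * swap 0 v) - 1) ≤ carrierCost n w (π * swap 0 v) t := by
  obtain ⟨hvv, hv0⟩ := mem_Hset.mp hv
  set q := π * swap 0 v
  have hl' : lockC n q = lockC n π := lockC_mul_swap_of_mem_Hset hv
  have h0v : π 0 ≠ v := fun h => hv0 (π.injective (hvv.trans h.symm))
  have hvq : v ∉ Hset n q := by
    rw [mem_Hset_mul_swap_self hv0]
    exact h0v
  have hq0 : q 0 = v := by simp [q, hvv]
  have hτv : carrierCost n w π v = w v * (lockC n π + 1) := if_pos hv
  have hl1 : (1 : ℝ) ≤ lockC n π := by exact_mod_cast Nat.one_le_iff_ne_zero.mpr hl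
  refine ⟨?_, hl', fun t ht => ?_, hvq, fun t => ?_⟩
  · have hxq : (Xset n q).inf' Xset_nonempty w ≤ w v := inf'_le w (hq0 ▸ apply_zero_mem_Xset)
    have hmq : minCarrierCost n w q ≤ w v * (lockC n π - 1) := by
      rw [← hl', ← carrierCost_of_notMem hvq]
      exact minCarrierCost_le v
    have hmπ : w v * (lockC n π + 1) ≤ minCarrierCost n w π := hτv ▸ le_inf' _ _ fun t _ => hm t
    have hxπ : w (π 0) ≤ (Xset n π).inf' Xset_nonempty w := le_inf' _ _ hx
    rw [add_potential_mul_swap hv0, if_neg h0v, if_pos hvv, hvv, excess_of_ne_zero hl,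
      excess_of_ne_zero (hl' ▸ hl)]
    linarith
  · rw [hq0]
    rcases mem_insert.mp (Xset_mul_swap_subset_insert hvv ht) with rfl | ht
    · exact le_rfl
    · have := hm t
      rw [hτv, carrierCost_of_notMem (notMem_Hset_of_mem_Xset ht)] at this
      nlinarith [hw t]
  · rw [hl']
    rcases eq_or_ne t v with rfl | htv
    · rw [carrierCost_of_notMem hvq, hl']
    · rw [carrierCost_mul_swap_of_ne hl' htv]
      nlinarith [hm t, hw v]

theorem exists_mem_sortCosts_le_of_mul_swap (hv : v ≠ 0)
    (h : ∃ c ∈ sortCosts n w (π * swap 0 v), c ≤ potential n w (π * swap 0 v))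
    (hcost : w (π 0) + w (π v) + potential n w (π * swap 0 v) ≤ potential n w π) :
    ∃ c ∈ sortCosts n w π, c ≤ potential n w π := by
  obtain ⟨c, ⟨s, hs0, hs1, rfl⟩, hc⟩ := h
  exact ⟨_, ⟨v :: s, List.forall_mem_cons.mpr ⟨hv, hs0⟩, hs1, rfl⟩, by rw [starCost]; linarith⟩

theorem exists_mem_sortCosts_le (hw : ∀ t, 0 ≤ w t) (π : Perm (Fin (n + 1))) :
    ∃ c ∈ sortCosts n w π, c ≤ potential n w π := by
  by_cases hπ : π = 1
  · exact ⟨0, ⟨[], by simp, hπ, rfl⟩, by rw [hπ, potential_one]⟩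
  by_cases hplace : lockC n π = 0 ∨ (Xset n π).inf' Xset_nonempty w < w (π 0)
  · have h0 : π 0 ≠ 0 := by
      intro h0
      rcases hplace with hl | hlt
      · exact hπ (eq_one_of_lockC_eq_zero h0 hl)
      · refine hlt.not_ge (le_inf' _ _ fun t ht => ?_)
        rw [h0, (mem_Xset.mp ht).eq_of_left h0]
    have hlt := card_support_mul_swap_apply_zero_lt h0
    exact exists_mem_sortCosts_le_of_mul_swap h0 (exists_mem_sortCosts_le hw _)
      (add_potential_mul_swap_apply_zero_le h0 hplace)
  simp only [not_or, not_lt] at hplace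
  obtain ⟨hl, hwx⟩ := hplace
  have hx : ∀ t ∈ Xset n π, w (π 0) ≤ w t := fun t ht => hwx.trans (inf'_le w ht)
  obtain ⟨a, -, ha⟩ := univ.exists_min_image (carrierCost n w π) univ_nonempty
  by_cases haH : a ∈ Hset n π
  · obtain ⟨hcost, hl', hx', haq, hm⟩ :=
      add_potential_mul_swap_le_of_mem_Hset hw hl hx haH fun t => ha t (mem_univ t)
    obtain ⟨v, hv, hlt, hcost'⟩ := exists_add_potential_mul_swap_le (hl' ▸ hl) hx' haq hm
    exact exists_mem_sortCosts_le_of_mul_swap (mem_Hset.mp haH).2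
      (exists_mem_sortCosts_le_of_mul_swap hv (exists_mem_sortCosts_le hw _) hcost') hcost
  · obtain ⟨v, hv, hlt, hcost⟩ := exists_add_potential_mul_swap_le hl hx haH fun t =>
      (carrierCost_of_notMem haH).symm.trans_le (ha t (mem_univ t))
    exact exists_mem_sortCosts_le_of_mul_swap hv (exists_mem_sortCosts_le hw _) hcost
termination_by (lockC n π, #π.support)
decreasing_by
  · rw [lockC_mul_swap_apply_zero]
    exact .right _ hlt
  · exact .left _ _ (hl' ▸ hlt)
  · exact .left _ _ hlt

end Strategy

section Formula

variable {n : ℕ} {w : Fin (n + 1) → ℝ} {π : Perm (Fin (n + 1))}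

theorem isLeast_potential (hw : ∀ t, 0 ≤ w t) (π : Perm (Fin (n + 1))) :
    IsLeast (sortCosts n w π) (potential n w π) := by
  obtain ⟨c, hc, hle⟩ := exists_mem_sortCosts_le hw π
  obtain rfl := le_antisymm hle (potential_le_of_mem_sortCosts hw hc)
  exact ⟨hc, fun _ => potential_le_of_mem_sortCosts hw⟩

theorem minCarrierCost_eq_min (hl : 1 ≤ lockC n π) (hA : (Aset n π).Nonempty)
    (hH : (Hset n π).Nonempty) :
    minCarrierCost n w π = min ((Aset n π).inf' hA w * ((lockC n π : ℝ) - 1))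
      ((Hset n π).inf' hH w * ((lockC n π : ℝ) + 1)) := by
  have hl : (1 : ℝ) ≤ lockC n π := by exact_mod_cast hl
  obtain ⟨a, ha, hae⟩ := exists_mem_eq_inf' hA w
  obtain ⟨h, hh, hhe⟩ := exists_mem_eq_inf' hH w
  refine le_antisymm ?_ (le_inf' _ _ fun t _ => ?_)
  · rw [hae, hhe]
    exact le_min ((minCarrierCost_le a).trans_eq (carrierCost_of_notMem (mem_Aset.mp ha)))
      ((minCarrierCost_le h).trans_eq (if_pos hh))
  · unfold carrierCost
    split_ifs with ht
    · exact (min_le_right _ _).trans (mul_le_mul_of_nonneg_right (inf'_le w ht) (by linarith))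
    · exact (min_le_left _ _).trans
        (mul_le_mul_of_nonneg_right (inf'_le w (mem_Aset.mpr ht)) (by linarith))

theorem minCarrierCost_eq_of_Hset_eq_empty (hl : 1 ≤ lockC n π) (hA : (Aset n π).Nonempty)
    (hH : Hset n π = ∅) :
    minCarrierCost n w π = (Aset n π).inf' hA w * ((lockC n π : ℝ) - 1) := by
  have hl : (1 : ℝ) ≤ lockC n π := by exact_mod_cast hl
  obtain ⟨a, ha, hae⟩ := exists_mem_eq_inf' hA w
  have hnH : ∀ t, t ∉ Hset n π := by simp [hH]
  refine le_antisymm ?_ (le_inf' _ _ fun t _ => ?_)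
  · rw [hae, ← carrierCost_of_notMem (hnH a)]
    exact minCarrierCost_le a
  · rw [carrierCost_of_notMem (hnH t)]
    exact mul_le_mul_of_nonneg_right (inf'_le w (mem_Aset.mpr (hnH t))) (by linarith)

end Formula

/-- The minimum cost of weighted token swapping on a star is
`D_w + 2w(x) + 2·min{w(a)(ℓ−1), w(h)(ℓ+1)}` when `ℓ ≥ 1` (with the `w(h)` term
omitted when no happy leaf exists), and `D_w` when `ℓ = 0`; here `x`, `a`, `h` are
minimum-weight tokens in the unlocked cycle, among active tokens, and on happy
leaves, respectively. -/
theorem stmt12 (n : ℕ) (w : Fin (n + 1) → ℝ) (hw : ∀ t, 0 < w t)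
    (π : Equiv.Perm (Fin (n + 1)))
    (hX : (Xset n π).Nonempty) (hA : (Aset n π).Nonempty) :
    (lockC n π = 0 →
      IsLeast {c : ℝ | ∃ s : List (Fin (n + 1)), (∀ v ∈ s, v ≠ 0) ∧
          applyStarSwaps n π s = 1 ∧ starCost w s π = c}
        (Dw n w π)) ∧
    (1 ≤ lockC n π →
      ∀ hH : (Hset n π).Nonempty,
      IsLeast {c : ℝ | ∃ s : List (Fin (n + 1)), (∀ v ∈ s, v ≠ 0) ∧
          applyStarSwaps n π s = 1 ∧ starCost w s π = c}
        (Dw n w π + 2 * (Xset n π).inf' hX w +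
          2 * min ((Aset n π).inf' hA w * ((lockC n π : ℝ) - 1))
                  ((Hset n π).inf' hH w * ((lockC n π : ℝ) + 1)))) ∧
    (1 ≤ lockC n π → Hset n π = ∅ →
      IsLeast {c : ℝ | ∃ s : List (Fin (n + 1)), (∀ v ∈ s, v ≠ 0) ∧
          applyStarSwaps n π s = 1 ∧ starCost w s π = c}
        (Dw n w π + 2 * (Xset n π).inf' hX w +
          2 * ((Aset n π).inf' hA w * ((lockC n π : ℝ) - 1)))) := by
  have h := isLeast_potential (fun t => (hw t).le) π
  refine ⟨fun hl => ?_, fun hl hH => ?_, fun hl hH => ?_⟩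
  · rwa [potential, excess, if_pos hl, mul_zero, add_zero] at h
  · rwa [potential, excess_of_ne_zero (by omega), minCarrierCost_eq_min hl hA hH, mul_add,
      ← add_assoc] at h
  · rwa [potential, excess_of_ne_zero (by omega), minCarrierCost_eq_of_Hset_eq_empty hl hA hH,
      mul_add, ← add_assoc] at h
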